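/- arXiv:2503.06739 — 4 statements merged into one kernel-verified Lean document; each statement's English description precedes it below -/
import Mathlib

section
/- Let L be a frame and let a ∈ L be regular, i.e. aᶜᶜ = a where aᶜ denotes the pseudocomplement sSup {x ∈ L | x ⊓ a = ⊥}. If x is a μ-element of L, then x ⊔ a is a μ-element in a↑; that is, for all y, z ∈ L with a ≤ y, a ≤ z, y ⊓ z ≠ a, (x ⊔ a) ⊓ y ≠ a, and (x ⊔ a) ⊓ z ≠ a, one has (x ⊔ a) ⊓ (y ⊓ z) ≠ a. -/
/-- An element `x` of a complete lattice is a μ-element. -/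
def IsMuElement {L : Type*} [Order.Frame L] (x : L) : Prop :=
  ∀ y z : L, y ⊓ z ≠ ⊥ → x ⊓ y ≠ ⊥ → x ⊓ z ≠ ⊥ → x ⊓ (y ⊓ z) ≠ ⊥

/-- The pseudocomplement of an element of a frame. -/
def pc {L : Type*} [Order.Frame L] (a : L) : L := sSup {x : L | x ⊓ a = ⊥}

lemma pc_inf_self {L : Type*} [Order.Frame L] (a : L) : a ⊓ pc a = ⊥ := by
  rw [pc, inf_sSup_eq]
  refine le_antisymm ?_ bot_le
  apply iSup₂_le
  intro b hb
  rw [inf_comm]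
  exact hb.le

lemma le_pc_of_inf_eq_bot {L : Type*} [Order.Frame L] {a b : L} (h : b ⊓ a = ⊥) :
    b ≤ pc a := le_sSup h

/-- In a frame, if `a` is regular and `x` is a μ-element, then
`x ⊔ a` is a μ-element in the upset of `a`. -/
theorem sup_isMuElement_upset_of_regular {L : Type*} [Order.Frame L] (a : L)
    (hreg : pc (pc a) = a) (x : L) (hx : IsMuElement x) :
    ∀ y z : L, a ≤ y → a ≤ z → y ⊓ z ≠ a →
      (x ⊔ a) ⊓ y ≠ a → (x ⊔ a) ⊓ z ≠ a → (x ⊔ a) ⊓ (y ⊓ z) ≠ a := by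
  intro y z hay haz hyz h1 h2
  set c := pc a with hc
  have hac : a ⊓ c = ⊥ := pc_inf_self a
  -- for u ≥ a, u ≠ a ↔ u ⊓ c ≠ ⊥
  have key : ∀ u : L, a ≤ u → (u ≠ a ↔ u ⊓ c ≠ ⊥) := by
    intro u hu
    constructor
    · intro hne hb
      exact hne (le_antisymm (hreg ▸ le_pc_of_inf_eq_bot hb) hu)
    · intro hb he
      exact hb (he ▸ hac)
  -- simplification of (x ⊔ a) ⊓ u ⊓ c for a ≤ u
  have simp1 : ∀ u : L, a ≤ u → (x ⊔ a) ⊓ u ⊓ c = x ⊓ (u ⊓ c) := by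
    intro u hu
    rw [inf_assoc, inf_sup_right,
      show a ⊓ (u ⊓ c) = ⊥ from by rw [← inf_assoc, inf_eq_left.mpr hu, hac], sup_bot_eq]
  have hy' : x ⊓ (y ⊓ c) ≠ ⊥ := by
    have := (key _ (le_inf (le_sup_right) hay)).mp h1
    rwa [simp1 y hay] at this
  have hz' : x ⊓ (z ⊓ c) ≠ ⊥ := by
    have := (key _ (le_inf (le_sup_right) haz)).mp h2
    rwa [simp1 z haz] at this
  have heq : (y ⊓ c) ⊓ (z ⊓ c) = y ⊓ z ⊓ c := by
    refine le_antisymm (le_inf (le_inf ?_ ?_) ?_) (le_inf (le_inf ?_ ?_) ?_)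
    · exact inf_le_left.trans inf_le_left
    · exact inf_le_right.trans inf_le_left
    · exact inf_le_right.trans inf_le_right
    · exact inf_le_left.trans inf_le_left
    · exact inf_le_right
    · exact le_inf (inf_le_left.trans inf_le_right) inf_le_right
  have hyz' : (y ⊓ c) ⊓ (z ⊓ c) ≠ ⊥ := by
    rw [heq]
    exact (key _ (le_inf hay haz)).mp hyz
  have hmu := hx (y ⊓ c) (z ⊓ c) hyz' hy' hz'
  rw [(key _ (le_inf le_sup_right (le_inf hay haz)))]
  intro hb
  apply hmu
  refine le_antisymm ?_ bot_le
  calc x ⊓ (y ⊓ c ⊓ (z ⊓ c)) ≤ (x ⊔ a) ⊓ (y ⊓ z) ⊓ c := by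
        apply le_inf (le_inf (inf_le_left.trans le_sup_left) ?_) ?_
        · exact inf_le_right.trans (le_inf (inf_le_left.trans inf_le_left)
            (inf_le_right.trans inf_le_left))
        · exact inf_le_right.trans (inf_le_left.trans inf_le_right)
    _ = ⊥ := hb
end

section
/- Let L be a frame, let a ∈ L, and let b be a pseudo-complement of a in L (i.e. a ⊓ b = ⊥ and for all c ∈ L, a ⊓ c = ⊥ implies c ≤ b). If c ∈ L is a μ-element of L, then b ⊔ c is a μ-element in b↑. -/
/-- `a` is a μ-element in the upset of `b` (for `b ≤ a`). -/
def IsMuElementAbove {L : Type*} [Order.Frame L] (a b : L) : Prop :=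
  ∀ y z : L, b ≤ y → b ≤ z → y ⊓ z ≠ b → a ⊓ y ≠ b → a ⊓ z ≠ b → a ⊓ (y ⊓ z) ≠ b

/-- In a frame, if `b` is a pseudo-complement of `a` and `c` is a μ-element
of `L`, then `b ⊔ c` is a μ-element in `b↑`. -/
theorem sup_isMuElementAbove_of_pseudoComplement {L : Type*} [Order.Frame L] {a b : L}
    (hab : a ⊓ b = ⊥) (hmax : ∀ c : L, a ⊓ c = ⊥ → c ≤ b)
    {c : L} (hc : IsMuElement c) : IsMuElementAbove (b ⊔ c) b := by
  intro y z hby hbz hyz hy hz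
  have key : ∀ x : L, b ≤ x → ((b ⊔ c) ⊓ x = b ↔ a ⊓ (c ⊓ x) = ⊥) := by
    intro x hx
    rw [inf_sup_right, inf_eq_left.mpr hx, sup_eq_left]
    constructor
    · intro h
      exact le_bot_iff.mp ((inf_le_inf_left a h).trans hab.le)
    · intro h
      exact hmax _ h
  have hayz : a ⊓ (y ⊓ z) ≠ ⊥ := by
    intro h
    exact hyz (le_antisymm (hmax _ h) (le_inf hby hbz))
  have h1 : c ⊓ (a ⊓ y) ≠ ⊥ := by
    intro h
    apply hy
    rw [key y hby, show a ⊓ (c ⊓ y) = c ⊓ (a ⊓ y) by ac_rfl, h]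
  have h2 : c ⊓ (a ⊓ z) ≠ ⊥ := by
    intro h
    apply hz
    rw [key z hbz, show a ⊓ (c ⊓ z) = c ⊓ (a ⊓ z) by ac_rfl, h]
  have h3 : (a ⊓ y) ⊓ (a ⊓ z) ≠ ⊥ := by
    rw [show (a ⊓ y) ⊓ (a ⊓ z) = a ⊓ (a ⊓ (y ⊓ z)) by ac_rfl, inf_of_le_right inf_le_left]
    exact hayz
  have := hc _ _ h3 h1 h2
  intro h
  apply this
  rw [show c ⊓ (a ⊓ y ⊓ (a ⊓ z)) = a ⊓ (a ⊓ (c ⊓ (y ⊓ z))) by ac_rfl,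
    inf_of_le_right inf_le_left, (key (y ⊓ z) (le_inf hby hbz)).mp h]
end

section
/- Let L be a frame, a ∈ L, and let b be a pseudo-complement of a in L (i.e. a ⊓ b = ⊥ and for all x ∈ L, a ⊓ x = ⊥ implies x ≤ b). Suppose c ∈ L satisfies a ≤ c and b ⊓ c = ⊥, and c is maximal with these properties (for every c' ∈ L with a ≤ c', b ⊓ c' = ⊥, and c ≤ c', one has c' = c). Then a is a μ-element in c↓. -/
/-- `a` is a μ-element in the downset of `b` (for `a ≤ b`). -/
def IsMuElementBelow {L : Type*} [Order.Frame L] (a b : L) : Prop :=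
  ∀ y z : L, y ≤ b → z ≤ b → y ⊓ z ≠ ⊥ → a ⊓ y ≠ ⊥ → a ⊓ z ≠ ⊥ → a ⊓ (y ⊓ z) ≠ ⊥

/-- In a frame, let `b` be a pseudo-complement of `a`, and let `c` be
maximal with respect to `a ≤ c` and `b ⊓ c = ⊥`. Then `a` is a μ-element in `c↓`. -/
theorem isMuElementBelow_of_maximal {L : Type*} [Order.Frame L] {a b c : L}
    (hab : a ⊓ b = ⊥) (hbmax : ∀ x : L, a ⊓ x = ⊥ → x ≤ b)
    (hac : a ≤ c) (hbc : b ⊓ c = ⊥)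
    (hcmax : ∀ c' : L, a ≤ c' → b ⊓ c' = ⊥ → c ≤ c' → c' = c) :
    IsMuElementBelow a c := by
  intro y z hy hz hyz hay haz h
  apply hyz
  have h1 : y ⊓ z ≤ b := hbmax _ h
  have h2 : y ⊓ z ≤ c := le_trans inf_le_left hy
  exact le_bot_iff.mp (le_inf h1 h2 |>.trans hbc.le)
end

section
/- Let L be a frame and let a, b ∈ L be nonzero (a ≠ ⊥, b ≠ ⊥). If a is μ-closed in L, a ≤ b, and b is a μ-element of L, then b is a μ-element in a↑; that is, for all y, z ∈ L with a ≤ y, a ≤ z, y ⊓ z ≠ a, b ⊓ y ≠ a, and b ⊓ z ≠ a, one has b ⊓ (y ⊓ z) ≠ a. -/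
/-- `x` is μ-closed in `L`. -/
def IsMuClosed {L : Type*} [Order.Frame L] (x : L) : Prop :=
  ∀ b : L, x ≤ b → IsMuElementBelow x b → x = b

/-- In a frame, if `a`, `b` are nonzero, `a` is μ-closed, `a ≤ b` and `b` is
a μ-element of `L`, then `b` is a μ-element in `a↑`. -/
theorem isMuElementAbove_of_isMuClosed {L : Type*} [Order.Frame L] {a b : L}
    (ha0 : a ≠ ⊥) (hb0 : b ≠ ⊥) (hclosed : IsMuClosed a) (hab : a ≤ b)
    (hb : IsMuElement b) :
    ∀ y z : L, a ≤ y → a ≤ z → y ⊓ z ≠ a → b ⊓ y ≠ a → b ⊓ z ≠ a → b ⊓ (y ⊓ z) ≠ a := by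
  intro y z hay haz hyz hby hbz hcontra
  set c := y ⊓ z with hc
  have hac : a ≤ c := le_inf hay haz
  -- a = b ⊓ c
  have hbc : b ⊓ c = a := hcontra
  -- show a is a μ-element below c
  have hkey : ∀ u : L, u ≤ c → a ⊓ u = b ⊓ u := by
    intro u hu
    rw [← hbc, inf_assoc, inf_comm c u, inf_of_le_left hu]
  have hmu : IsMuElementBelow a c := by
    intro u v hu hv huv hau hav
    rw [hkey u hu] at hau
    rw [hkey v hv] at hav
    rw [hkey (u ⊓ v) (le_trans inf_le_left hu)]
    exact hb u v huv hau hav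
  exact hyz (hclosed c hac hmu).symm
end
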